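/- arXiv:2302.09694 — 2 statements merged into one kernel-verified Lean document; each statement's English description precedes it below -/
import Mathlib

section
/- Assume: (positivity) P(T=t, M=m, Z=z) > 0 for every t ∈ {0,1}, m ∈ 𝕄 and every z with P(Z=z) > 0; (i) cross-world independence: for all t, t' ∈ {0,1}, m, m' ∈ 𝕄 and z with P(Z=z) > 0, E[Y(t,m)·1{M(t')=m'} | Z=z] = E[Y(t,m) | Z=z] · P(M(t')=m' | Z=z); (ii) mediator ignorability: for all t, t' ∈ {0,1}, m ∈ 𝕄, v ∈ V and u, s with P(Z_TM=u, Z_MY=s) > 0, P(M(t)=m, T=t', Z_TY=v | Z_TM=u, Z_MY=s) = P(M(t)=m | Z_TM=u, Z_MY=s) · P(T=t', Z_TY=v | Z_TM=u, Z_MY=s); (iii) outcome ignorability: for all t, t' ∈ {0,1}, m, m' ∈ 𝕄, u ∈ U and v, s with P(Z_TY=v, Z_MY=s) > 0, E[Y(t,m)·1{T=t', M=m', Z_TM=u} | Z_TY=v, Z_MY=s] = E[Y(t,m) | Z_TY=v, Z_MY=s] · P(T=t', M=m', Z_TM=u | Z_TY=v, Z_MY=s). Then NDE = ∑_{z=(u,v,s)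 : P(Z=z)>0} ∑_{m ∈ 𝕄} (E[Y | T=1, M=m, Z_TY=v, Z_MY=s] − E[Y | T=0, M=m, Z_TY=v, Z_MY=s]) · P(M=m | T=0, Z_TM=u, Z_MY=s) · P(Z=z). -/
/-!
Split `E[Y(1,M(0)) - Y(0,M(0))]` over the strata `Z = z`. Inside a stratum, cross-world
independence (i) factors the conditional mean as
`∑ₘ (E[Y(1,m) | z] - E[Y(0,m) | z]) P(M(0) = m | z)`.
Outcome ignorability (iii), summed over the values of `(T, M)` and of `Z_TM` respectively, makes
`Y(t,m)` mean-independent of `{Z_TM = u}` and of `{T = t, M = m}` given `(Z_TY, Z_MY)`, so by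
consistency `E[Y(t,m) | z] = E[Y | T = t, M = m, Z_TY, Z_MY]`. In the same way mediator
ignorability (ii), summed over `T` and over `Z_TY`, gives
`P(M(0) = m | z) = P(M = m | T = 0, Z_TM, Z_MY)`. Positivity keeps all conditioning events non-null.
-/

open Finset
open scoped Classical

/-- Probability of an event `A` under the finite distribution `p`. -/
noncomputable def Pr {Ω : Type*} [Fintype Ω] (p : Ω → ℝ) (A : Ω → Prop) : ℝ :=
  ∑ ω, if A ω then p ω else 0

/-- Expectation of a random variable `V` under the finite distribution `p`. -/
noncomputable def Ex {Ω : Type*} [Fintype Ω] (p : Ω → ℝ) (V : Ω → ℝ) : ℝ :=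
  ∑ ω, p ω * V ω

/-- Conditional probability `P(A | B) = P(A ∩ B) / P(B)`. -/
noncomputable def PrCond {Ω : Type*} [Fintype Ω] (p : Ω → ℝ) (A B : Ω → Prop) : ℝ :=
  Pr p (fun ω => A ω ∧ B ω) / Pr p B

/-- Conditional expectation `E[V | B] = E[V·1_B] / P(B)`. -/
noncomputable def ExCond {Ω : Type*} [Fintype Ω] (p : Ω → ℝ) (V : Ω → ℝ) (B : Ω → Prop) : ℝ :=
  Ex p (fun ω => V ω * (if B ω then 1 else 0)) / Pr p B

section PartialExpectation

variable {Ω : Type*} [Fintype Ω]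

noncomputable def ExOn (p f : Ω → ℝ) (B : Ω → Prop) : ℝ :=
  ∑ ω with B ω, p ω * f ω

/-- `f` is mean-independent of the event `A` given `B`, i.e. `E[f·1_A | B] = E[f | B] P(A | B)`,
cross-multiplied so that it needs no `P(B) > 0`. -/
def MeanIndepOn (p f : Ω → ℝ) (A B : Ω → Prop) : Prop :=
  ExOn p f (fun ω => A ω ∧ B ω) * Pr p B = ExOn p f B * Pr p (fun ω => A ω ∧ B ω)

theorem Pr_eq_ExOn_one (p : Ω → ℝ) (B : Ω → Prop) : Pr p B = ExOn p (fun _ => 1) B := by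
  simp [Pr, ExOn, Finset.sum_filter]

theorem ExOn_mul_indicator (p f : Ω → ℝ) (A B : Ω → Prop) [DecidablePred A] :
    ExOn p (fun ω => f ω * if A ω then 1 else 0) B = ExOn p f (fun ω => A ω ∧ B ω) := by
  simp only [ExOn, Finset.sum_filter]
  refine Finset.sum_congr rfl fun ω _ => ?_
  by_cases hA : A ω <;> simp [hA]

theorem ExCond_eq_ExOn_div (p f : Ω → ℝ) (B : Ω → Prop) :
    ExCond p f B = ExOn p f B / Pr p B := by
  simp only [ExCond, Ex, ExOn, Finset.sum_filter]
  congr 1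
  refine Finset.sum_congr rfl fun ω _ => ?_
  split_ifs <;> simp

theorem PrCond_eq_ExCond_indicator (p : Ω → ℝ) (A B : Ω → Prop) :
    PrCond p A B = ExCond p (fun ω => if A ω then 1 else 0) B := by
  rw [PrCond, ExCond_eq_ExOn_div, Pr_eq_ExOn_one, ← ExOn_mul_indicator]
  simp

theorem ExOn_congr {p f g : Ω → ℝ} {B : Ω → Prop} (hfg : ∀ ω, B ω → f ω = g ω) :
    ExOn p f B = ExOn p g B :=
  Finset.sum_congr rfl fun ω hω => by rw [hfg ω (Finset.mem_filter.mp hω).2]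

theorem ExCond_congr {p f g : Ω → ℝ} {B C : Ω → Prop} (hBC : ∀ ω, B ω ↔ C ω)
    (hfg : ∀ ω, B ω → f ω = g ω) : ExCond p f B = ExCond p g C := by
  obtain rfl : B = C := funext fun ω => propext (hBC ω)
  rw [ExCond_eq_ExOn_div, ExCond_eq_ExOn_div, ExOn_congr hfg]

theorem ExOn_fiberwise {ι : Type*} [Fintype ι] (p f : Ω → ℝ) (g : Ω → ι) (C : Ω → Prop) :
    ∑ i, ExOn p f (fun ω => g ω = i ∧ C ω) = ExOn p f C := by
  rw [ExOn, ← Finset.sum_fiberwise _ g]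
  refine Finset.sum_congr rfl fun i _ => ?_
  rw [ExOn, Finset.filter_filter]
  simp only [and_comm]

theorem Pr_fiberwise {ι : Type*} [Fintype ι] (p : Ω → ℝ) (g : Ω → ι) (C : Ω → Prop) :
    ∑ i, Pr p (fun ω => g ω = i ∧ C ω) = Pr p C := by
  simp only [Pr_eq_ExOn_one, ExOn_fiberwise]

variable {p : Ω → ℝ}

theorem Pr_pos_of_imp (hp : ∀ ω, 0 ≤ p ω) {B C : Ω → Prop} (hB : 0 < Pr p B)
    (hBC : ∀ ω, B ω → C ω) : 0 < Pr p C := by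
  refine hB.trans_le (Finset.sum_le_sum fun ω _ => ?_)
  by_cases hb : B ω
  · simp [hb, hBC ω hb]
  · by_cases hc : C ω <;> simp [hb, hc, hp ω]

theorem ExOn_eq_zero_of_Pr_eq_zero (hp : ∀ ω, 0 ≤ p ω) (f : Ω → ℝ) {B : Ω → Prop}
    (hB : Pr p B = 0) : ExOn p f B = 0 := by
  rw [Pr, ← Finset.sum_filter, Finset.sum_eq_zero_iff_of_nonneg fun ω _ => hp ω] at hB
  exact Finset.sum_eq_zero fun ω hω => by rw [hB ω hω, zero_mul]

theorem Ex_eq_sum_ExCond_mul_Pr (hp : ∀ ω, 0 ≤ p ω) {ι : Type*} [Fintype ι] (g : Ω → ι)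
    (V : Ω → ℝ) :
    Ex p V = ∑ i with 0 < Pr p (fun ω => g ω = i),
      ExCond p V (fun ω => g ω = i) * Pr p (fun ω => g ω = i) := by
  have h_total : Ex p V = ∑ i, ExOn p V (fun ω => g ω = i) := by
    simpa [Ex, ExOn] using (ExOn_fiberwise p V g (fun _ => True)).symm
  rw [h_total, ← Finset.sum_filter_of_ne (p := fun i => 0 < Pr p (fun ω => g ω = i))]
  · refine Finset.sum_congr rfl fun i hi => ?_
    rw [ExCond_eq_ExOn_div, div_mul_cancel₀ _ (Finset.mem_filter.mp hi).2.ne']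
  · intro i _ hi
    refine (Finset.sum_nonneg fun ω _ => ?_).lt_of_ne fun h => hi ?_
    · split_ifs <;> simp [hp ω]
    · exact ExOn_eq_zero_of_Pr_eq_zero hp V h.symm

theorem ExCond_sub (f g : Ω → ℝ) (B : Ω → Prop) :
    ExCond p (fun ω => f ω - g ω) B = ExCond p f B - ExCond p g B := by
  simp only [ExCond_eq_ExOn_div, ExOn, mul_sub, Finset.sum_sub_distrib, sub_div]

theorem ExCond_comp_eq_sum {𝕄 : Type*} [Fintype 𝕄] (f : 𝕄 → Ω → ℝ) (N : Ω → 𝕄)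
    (B : Ω → Prop) :
    ExCond p (fun ω => f (N ω) ω) B =
      ∑ m, ExCond p (fun ω => f m ω * if N ω = m then 1 else 0) B := by
  simp only [ExCond_eq_ExOn_div, ExOn_mul_indicator, ← Finset.sum_div]
  rw [← ExOn_fiberwise p _ N B]
  refine congrArg (· / _) (Finset.sum_congr rfl fun m _ => ExOn_congr fun ω hω => ?_)
  rw [hω.1]

end PartialExpectation

namespace MeanIndepOn

variable {Ω : Type*} [Fintype Ω] {p f : Ω → ℝ} {A B : Ω → Prop}

theorem of_ExCond [DecidablePred A] (hB : Pr p B ≠ 0)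
    (h : ExCond p (fun ω => f ω * if A ω then 1 else 0) B = ExCond p f B * PrCond p A B) :
    MeanIndepOn p f A B := by
  rw [ExCond_eq_ExOn_div, ExCond_eq_ExOn_div, ExOn_mul_indicator, PrCond] at h
  rw [MeanIndepOn]
  field_simp at h
  linear_combination h

theorem indicator_of_PrCond {C : Ω → Prop} (hB : Pr p B ≠ 0)
    (h : PrCond p (fun ω => C ω ∧ A ω) B = PrCond p C B * PrCond p A B) :
    MeanIndepOn p (fun ω => if C ω then 1 else 0) A B := by
  rw [PrCond_eq_ExCond_indicator p (fun ω => C ω ∧ A ω), PrCond_eq_ExCond_indicator p C] at h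
  refine of_ExCond hB (Eq.trans (ExCond_congr (fun _ => Iff.rfl) fun ω _ => ?_) h)
  by_cases hC : C ω <;> by_cases hA : A ω <;> simp [hC, hA]

theorem congr {A' : Ω → Prop} (h : MeanIndepOn p f A B) (hA : ∀ ω, A ω ↔ A' ω) :
    MeanIndepOn p f A' B := by
  obtain rfl : A = A' := funext fun ω => propext (hA ω)
  exact h

theorem of_fiberwise {ι : Type*} [Fintype ι] (g : Ω → ι)
    (h : ∀ i, MeanIndepOn p f (fun ω => g ω = i ∧ A ω) B) : MeanIndepOn p f A B := by
  have hE := ExOn_fiberwise p f g (fun ω => A ω ∧ B ω)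
  have hP := Pr_fiberwise p g (fun ω => A ω ∧ B ω)
  simp only [MeanIndepOn, and_assoc] at h
  rw [MeanIndepOn, ← hE, ← hP, Finset.sum_mul, Finset.mul_sum]
  exact Finset.sum_congr rfl fun i _ => h i

theorem ExCond_and (hp : ∀ ω, 0 ≤ p ω) (h : MeanIndepOn p f A B)
    (hAB : 0 < Pr p (fun ω => A ω ∧ B ω)) : ExCond p f (fun ω => A ω ∧ B ω) = ExCond p f B := by
  have hB : 0 < Pr p B := Pr_pos_of_imp hp hAB fun _ h => h.2
  rw [ExCond_eq_ExOn_div, ExCond_eq_ExOn_div, div_eq_div_iff hAB.ne' hB.ne']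
  exact h

end MeanIndepOn

section Identification

variable {Ω τ 𝕄 U V S : Type*} [Fintype Ω] {p : Ω → ℝ} {T : Ω → τ} {M : τ → Ω → 𝕄}
  {ZTM : Ω → U} {ZTY : Ω → V} {ZMY : Ω → S} {m : 𝕄} {u : U} {v : V} {s : S}

theorem ExCond_potentialOutcome_eq_observed [Fintype τ] [DecidableEq τ] [Fintype 𝕄] [Fintype U]
    (hp : ∀ ω, 0 ≤ p ω) {Y : τ → 𝕄 → Ω → ℝ} {t : τ}
    (hOut : ∀ t' m' u', 0 < Pr p (fun ω => ZTY ω = v ∧ ZMY ω = s) →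
      ExCond p (fun ω => Y t m ω * if T ω = t' ∧ M (T ω) ω = m' ∧ ZTM ω = u' then 1 else 0)
          (fun ω => ZTY ω = v ∧ ZMY ω = s) =
        ExCond p (fun ω => Y t m ω) (fun ω => ZTY ω = v ∧ ZMY ω = s) *
          PrCond p (fun ω => T ω = t' ∧ M (T ω) ω = m' ∧ ZTM ω = u')
            (fun ω => ZTY ω = v ∧ ZMY ω = s))
    (hpos : 0 < Pr p (fun ω => T ω = t ∧ M (T ω) ω = m ∧ (ZTM ω, ZTY ω, ZMY ω) = (u, v, s))) :
    ExCond p (fun ω => Y t m ω) (fun ω => (ZTM ω, ZTY ω, ZMY ω) = (u, v, s)) =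
      ExCond p (fun ω => Y (T ω) (M (T ω) ω) ω)
        (fun ω => T ω = t ∧ M (T ω) ω = m ∧ ZTY ω = v ∧ ZMY ω = s) := by
  have hpos_of_imp {C : Ω → Prop} (hC : ∀ ω, T ω = t → M (T ω) ω = m → ZTM ω = u →
      ZTY ω = v → ZMY ω = s → C ω) : 0 < Pr p C :=
    Pr_pos_of_imp hp hpos fun ω ⟨ht, hm, hz⟩ => by
      simp only [Prod.mk.injEq] at hz
      exact hC ω ht hm hz.1 hz.2.1 hz.2.2
  have hvs : 0 < Pr p (fun ω => ZTY ω = v ∧ ZMY ω = s) :=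
    hpos_of_imp fun _ _ _ _ hv hs => ⟨hv, hs⟩
  have h_u : MeanIndepOn p (fun ω => Y t m ω) (fun ω => ZTM ω = u)
      (fun ω => ZTY ω = v ∧ ZMY ω = s) :=
    .of_fiberwise T fun t' => .of_fiberwise (fun ω => M (T ω) ω) fun m' =>
      (MeanIndepOn.of_ExCond hvs.ne' (hOut t' m' u hvs)).congr fun _ => and_left_comm
  have h_tm : MeanIndepOn p (fun ω => Y t m ω) (fun ω => T ω = t ∧ M (T ω) ω = m)
      (fun ω => ZTY ω = v ∧ ZMY ω = s) :=
    .of_fiberwise ZTM fun u' => (MeanIndepOn.of_ExCond hvs.ne' (hOut t m u' hvs)).congr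
      fun ω => by tauto
  calc ExCond p (fun ω => Y t m ω) (fun ω => (ZTM ω, ZTY ω, ZMY ω) = (u, v, s))
      _ = ExCond p (fun ω => Y t m ω) (fun ω => ZTM ω = u ∧ ZTY ω = v ∧ ZMY ω = s) :=
        ExCond_congr (fun ω => by simp only [Prod.mk.injEq]) fun _ _ => rfl
      _ = ExCond p (fun ω => Y t m ω) (fun ω => ZTY ω = v ∧ ZMY ω = s) :=
        h_u.ExCond_and hp (hpos_of_imp fun _ _ _ hu hv hs => ⟨hu, hv, hs⟩)
      _ = ExCond p (fun ω => Y t m ω)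
          (fun ω => (T ω = t ∧ M (T ω) ω = m) ∧ ZTY ω = v ∧ ZMY ω = s) :=
        (h_tm.ExCond_and hp (hpos_of_imp fun _ ht hm _ hv hs => ⟨⟨ht, hm⟩, hv, hs⟩)).symm
      _ = _ := ExCond_congr (fun ω => and_assoc) fun ω ⟨⟨ht, hm⟩, _⟩ => by rw [← hm, ← ht]

theorem PrCond_potentialMediator_eq_observed [Fintype τ] [Fintype V] (hp : ∀ ω, 0 ≤ p ω) {t₀ : τ}
    (hMed : ∀ t' v', 0 < Pr p (fun ω => ZTM ω = u ∧ ZMY ω = s) →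
      PrCond p (fun ω => M t₀ ω = m ∧ T ω = t' ∧ ZTY ω = v')
          (fun ω => ZTM ω = u ∧ ZMY ω = s) =
        PrCond p (fun ω => M t₀ ω = m) (fun ω => ZTM ω = u ∧ ZMY ω = s) *
          PrCond p (fun ω => T ω = t' ∧ ZTY ω = v') (fun ω => ZTM ω = u ∧ ZMY ω = s))
    (hpos : 0 < Pr p (fun ω => T ω = t₀ ∧ M (T ω) ω = m ∧ (ZTM ω, ZTY ω, ZMY ω) = (u, v, s))) :
    PrCond p (fun ω => M t₀ ω = m) (fun ω => (ZTM ω, ZTY ω, ZMY ω) = (u, v, s)) =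
      PrCond p (fun ω => M (T ω) ω = m) (fun ω => T ω = t₀ ∧ ZTM ω = u ∧ ZMY ω = s) := by
  have hpos_of_imp {C : Ω → Prop} (hC : ∀ ω, T ω = t₀ → ZTM ω = u → ZTY ω = v → ZMY ω = s →
      C ω) : 0 < Pr p C :=
    Pr_pos_of_imp hp hpos fun ω ⟨ht, _, hz⟩ => by
      simp only [Prod.mk.injEq] at hz
      exact hC ω ht hz.1 hz.2.1 hz.2.2
  have hus : 0 < Pr p (fun ω => ZTM ω = u ∧ ZMY ω = s) :=
    hpos_of_imp fun _ _ hu _ hs => ⟨hu, hs⟩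
  have h_v : MeanIndepOn p (fun ω => if M t₀ ω = m then 1 else 0) (fun ω => ZTY ω = v)
      (fun ω => ZTM ω = u ∧ ZMY ω = s) :=
    .of_fiberwise T fun t' => .indicator_of_PrCond hus.ne' (hMed t' v hus)
  have h_t : MeanIndepOn p (fun ω => if M t₀ ω = m then 1 else 0) (fun ω => T ω = t₀)
      (fun ω => ZTM ω = u ∧ ZMY ω = s) :=
    .of_fiberwise ZTY fun v' => (MeanIndepOn.indicator_of_PrCond hus.ne' (hMed t₀ v' hus)).congr
      fun ω => and_comm
  rw [PrCond_eq_ExCond_indicator, PrCond_eq_ExCond_indicator]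
  calc ExCond p (fun ω => if M t₀ ω = m then 1 else 0) (fun ω => (ZTM ω, ZTY ω, ZMY ω) = (u, v, s))
      _ = ExCond p (fun ω => if M t₀ ω = m then 1 else 0)
          (fun ω => ZTY ω = v ∧ ZTM ω = u ∧ ZMY ω = s) :=
        ExCond_congr (fun ω => by simp only [Prod.mk.injEq]; tauto) fun _ _ => rfl
      _ = ExCond p (fun ω => if M t₀ ω = m then 1 else 0) (fun ω => ZTM ω = u ∧ ZMY ω = s) :=
        h_v.ExCond_and hp (hpos_of_imp fun _ _ hu hv hs => ⟨hv, hu, hs⟩)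
      _ = ExCond p (fun ω => if M t₀ ω = m then 1 else 0)
          (fun ω => T ω = t₀ ∧ ZTM ω = u ∧ ZMY ω = s) :=
        (h_t.ExCond_and hp (hpos_of_imp fun _ ht hu _ hs => ⟨ht, hu, hs⟩)).symm
      _ = _ := ExCond_congr (fun _ => Iff.rfl) fun ω ⟨ht, _⟩ => by rw [ht]

end Identification

theorem stmt6_general {Ω 𝕄 U V S : Type*}
    [Fintype Ω] [Fintype 𝕄] [Fintype U] [Fintype V] [Fintype S]
    (p : Ω → ℝ) (hp : ∀ ω, 0 ≤ p ω)
    (T : Ω → Fin 2) (M : Fin 2 → Ω → 𝕄) (Y : Fin 2 → 𝕄 → Ω → ℝ)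
    (ZTM : Ω → U) (ZTY : Ω → V) (ZMY : Ω → S)
    -- positivity
    (hpos : ∀ (t : Fin 2) (m : 𝕄) (z : U × V × S),
      0 < Pr p (fun ω => (ZTM ω, ZTY ω, ZMY ω) = z) →
      0 < Pr p (fun ω => T ω = t ∧ M (T ω) ω = m ∧ (ZTM ω, ZTY ω, ZMY ω) = z))
    -- (i) cross-world independence given Z
    (hCW : ∀ (t t' : Fin 2) (m m' : 𝕄) (z : U × V × S),
      0 < Pr p (fun ω => (ZTM ω, ZTY ω, ZMY ω) = z) →
      ExCond p (fun ω => Y t m ω * (if M t' ω = m' then 1 else 0))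
          (fun ω => (ZTM ω, ZTY ω, ZMY ω) = z) =
        ExCond p (fun ω => Y t m ω) (fun ω => (ZTM ω, ZTY ω, ZMY ω) = z) *
          PrCond p (fun ω => M t' ω = m') (fun ω => (ZTM ω, ZTY ω, ZMY ω) = z))
    -- (ii) mediator ignorability
    (hMed : ∀ (t t' : Fin 2) (m : 𝕄) (v : V) (u : U) (s : S),
      0 < Pr p (fun ω => ZTM ω = u ∧ ZMY ω = s) →
      PrCond p (fun ω => M t ω = m ∧ T ω = t' ∧ ZTY ω = v)
          (fun ω => ZTM ω = u ∧ ZMY ω = s) =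
        PrCond p (fun ω => M t ω = m) (fun ω => ZTM ω = u ∧ ZMY ω = s) *
          PrCond p (fun ω => T ω = t' ∧ ZTY ω = v) (fun ω => ZTM ω = u ∧ ZMY ω = s))
    -- (iii) outcome ignorability
    (hOut : ∀ (t t' : Fin 2) (m m' : 𝕄) (u : U) (v : V) (s : S),
      0 < Pr p (fun ω => ZTY ω = v ∧ ZMY ω = s) →
      ExCond p
          (fun ω => Y t m ω * (if T ω = t' ∧ M (T ω) ω = m' ∧ ZTM ω = u then 1 else 0))
          (fun ω => ZTY ω = v ∧ ZMY ω = s) =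
        ExCond p (fun ω => Y t m ω) (fun ω => ZTY ω = v ∧ ZMY ω = s) *
          PrCond p (fun ω => T ω = t' ∧ M (T ω) ω = m' ∧ ZTM ω = u)
            (fun ω => ZTY ω = v ∧ ZMY ω = s)) :
    Ex p (fun ω => Y 1 (M 0 ω) ω - Y 0 (M 0 ω) ω) =
      ∑ z ∈ Finset.univ.filter
          (fun z : U × V × S => 0 < Pr p (fun ω => (ZTM ω, ZTY ω, ZMY ω) = z)),
        ∑ m : 𝕄,
          (ExCond p (fun ω => Y (T ω) (M (T ω) ω) ω)
              (fun ω => T ω = 1 ∧ M (T ω) ω = m ∧ ZTY ω = z.2.1 ∧ ZMY ω = z.2.2) -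
            ExCond p (fun ω => Y (T ω) (M (T ω) ω) ω)
              (fun ω => T ω = 0 ∧ M (T ω) ω = m ∧ ZTY ω = z.2.1 ∧ ZMY ω = z.2.2)) *
            PrCond p (fun ω => M (T ω) ω = m)
              (fun ω => T ω = 0 ∧ ZTM ω = z.1 ∧ ZMY ω = z.2.2) *
            Pr p (fun ω => (ZTM ω, ZTY ω, ZMY ω) = z) := by
  rw [Ex_eq_sum_ExCond_mul_Pr hp (fun ω => (ZTM ω, ZTY ω, ZMY ω))]
  refine Finset.sum_congr rfl fun ⟨u, v, s⟩ hz => ?_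
  replace hz := (Finset.mem_filter.mp hz).2
  rw [← Finset.sum_mul, ExCond_sub, ExCond_comp_eq_sum, ExCond_comp_eq_sum,
    ← Finset.sum_sub_distrib]
  refine congrArg (· * _) (Finset.sum_congr rfl fun m _ => ?_)
  rw [hCW 1 0 m m _ hz, hCW 0 0 m m _ hz, ← sub_mul,
    ExCond_potentialOutcome_eq_observed hp (fun t' m' u' => hOut 1 t' m m' u' v s) (hpos 1 m _ hz),
    ExCond_potentialOutcome_eq_observed hp (fun t' m' u' => hOut 0 t' m m' u' v s) (hpos 0 m _ hz),
    PrCond_potentialMediator_eq_observed hp (fun t' v' => hMed 0 t' m v' u s) (hpos 0 m _ hz)]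

/-- identification of NDE (Theorem 2, Equation 8 of the paper). -/
theorem stmt6 {Ω 𝕄 U V S : Type*}
    [Fintype Ω] [Fintype 𝕄] [Fintype U] [Fintype V] [Fintype S]
    (p : Ω → ℝ) (hp : ∀ ω, 0 ≤ p ω) (hp1 : ∑ ω, p ω = 1)
    (T : Ω → Fin 2) (M : Fin 2 → Ω → 𝕄) (Y : Fin 2 → 𝕄 → Ω → ℝ)
    (ZTM : Ω → U) (ZTY : Ω → V) (ZMY : Ω → S)
    -- positivity
    (hpos : ∀ (t : Fin 2) (m : 𝕄) (z : U × V × S),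
      0 < Pr p (fun ω => (ZTM ω, ZTY ω, ZMY ω) = z) →
      0 < Pr p (fun ω => T ω = t ∧ M (T ω) ω = m ∧ (ZTM ω, ZTY ω, ZMY ω) = z))
    -- (i) cross-world independence given Z
    (hCW : ∀ (t t' : Fin 2) (m m' : 𝕄) (z : U × V × S),
      0 < Pr p (fun ω => (ZTM ω, ZTY ω, ZMY ω) = z) →
      ExCond p (fun ω => Y t m ω * (if M t' ω = m' then 1 else 0))
          (fun ω => (ZTM ω, ZTY ω, ZMY ω) = z) =
        ExCond p (fun ω => Y t m ω) (fun ω => (ZTM ω, ZTY ω, ZMY ω) = z) *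
          PrCond p (fun ω => M t' ω = m') (fun ω => (ZTM ω, ZTY ω, ZMY ω) = z))
    -- (ii) mediator ignorability
    (hMed : ∀ (t t' : Fin 2) (m : 𝕄) (v : V) (u : U) (s : S),
      0 < Pr p (fun ω => ZTM ω = u ∧ ZMY ω = s) →
      PrCond p (fun ω => M t ω = m ∧ T ω = t' ∧ ZTY ω = v)
          (fun ω => ZTM ω = u ∧ ZMY ω = s) =
        PrCond p (fun ω => M t ω = m) (fun ω => ZTM ω = u ∧ ZMY ω = s) *
          PrCond p (fun ω => T ω = t' ∧ ZTY ω = v) (fun ω => ZTM ω = u ∧ ZMY ω = s))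
    -- (iii) outcome ignorability
    (hOut : ∀ (t t' : Fin 2) (m m' : 𝕄) (u : U) (v : V) (s : S),
      0 < Pr p (fun ω => ZTY ω = v ∧ ZMY ω = s) →
      ExCond p
          (fun ω => Y t m ω * (if T ω = t' ∧ M (T ω) ω = m' ∧ ZTM ω = u then 1 else 0))
          (fun ω => ZTY ω = v ∧ ZMY ω = s) =
        ExCond p (fun ω => Y t m ω) (fun ω => ZTY ω = v ∧ ZMY ω = s) *
          PrCond p (fun ω => T ω = t' ∧ M (T ω) ω = m' ∧ ZTM ω = u)
            (fun ω => ZTY ω = v ∧ ZMY ω = s)) :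
    Ex p (fun ω => Y 1 (M 0 ω) ω - Y 0 (M 0 ω) ω) =
      ∑ z ∈ Finset.univ.filter
          (fun z : U × V × S => 0 < Pr p (fun ω => (ZTM ω, ZTY ω, ZMY ω) = z)),
        ∑ m : 𝕄,
          (ExCond p (fun ω => Y (T ω) (M (T ω) ω) ω)
              (fun ω => T ω = 1 ∧ M (T ω) ω = m ∧ ZTY ω = z.2.1 ∧ ZMY ω = z.2.2) -
            ExCond p (fun ω => Y (T ω) (M (T ω) ω) ω)
              (fun ω => T ω = 0 ∧ M (T ω) ω = m ∧ ZTY ω = z.2.1 ∧ ZMY ω = z.2.2)) *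
            PrCond p (fun ω => M (T ω) ω = m)
              (fun ω => T ω = 0 ∧ ZTM ω = z.1 ∧ ZMY ω = z.2.2) *
            Pr p (fun ω => (ZTM ω, ZTY ω, ZMY ω) = z) :=
  stmt6_general p hp T M Y ZTM ZTY ZMY hpos hCW hMed hOut
end

section
/- Assume: (positivity) P(T=t, M=m, Z=z) > 0 for every t ∈ {0,1}, m ∈ 𝕄 and every z with P(Z=z) > 0; (i) cross-world independence: for all t, t' ∈ {0,1}, m, m' ∈ 𝕄 and z with P(Z=z) > 0, E[Y(t,m)·1{M(t')=m'} | Z=z] = E[Y(t,m) | Z=z] · P(M(t')=m' | Z=z); (ii) mediator ignorability: for all t, t' ∈ {0,1}, m ∈ 𝕄, v ∈ V and u, s with P(Z_TM=u, Z_MY=s) > 0, P(M(t)=m, T=t', Z_TY=v | Z_TM=u, Z_MY=s) = P(M(t)=m | Z_TM=u, Z_MY=s) · P(T=t', Z_TY=v | Z_TM=u, Z_MY=s); (iii) outcome ignorability: for all t, t' ∈ {0,1}, m, m' ∈ 𝕄, u ∈ U and v, s with P(Z_TY=v, Z_MY=s) > 0, E[Y(t,m)·1{T=t', M=m', Z_TM=u}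 | Z_TY=v, Z_MY=s] = E[Y(t,m) | Z_TY=v, Z_MY=s] · P(T=t', M=m', Z_TM=u | Z_TY=v, Z_MY=s). Then NIE_r = ∑_{z=(u,v,s) : P(Z=z)>0} ∑_{m ∈ 𝕄} E[Y | T=1, M=m, Z_TY=v, Z_MY=s] · (P(M=m | T=0, Z_TM=u, Z_MY=s) − P(M=m | T=1, Z_TM=u, Z_MY=s)) · P(Z=z). -/
open Finset
open scoped Classical

section infra
variable {Ω : Type*} [Fintype Ω] (p : Ω → ℝ)

/-- E[f · 1_B] as a sum. -/
noncomputable def EI (f : Ω → ℝ) (B : Ω → Prop) : ℝ :=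
  ∑ ω, if B ω then p ω * f ω else 0

lemma Ex_ind (f : Ω → ℝ) (B : Ω → Prop) :
    Ex p (fun ω => f ω * (if B ω then 1 else 0)) = EI p f B := by
  unfold Ex EI
  refine Finset.sum_congr rfl fun ω _ => ?_
  by_cases h : B ω <;> simp [h]

lemma ExCond_eq (f : Ω → ℝ) (B : Ω → Prop) :
    ExCond p f B = EI p f B / Pr p B := by
  rw [ExCond, Ex_ind]

lemma Pr_eq_EI_one (B : Ω → Prop) : Pr p B = EI p (fun _ => 1) B := by
  unfold Pr EI; simp

lemma Pr_nonneg (hp : ∀ ω, 0 ≤ p ω) (A : Ω → Prop) : 0 ≤ Pr p A :=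
  Finset.sum_nonneg fun ω _ => by by_cases h : A ω <;> simp [h, hp ω]

lemma Pr_mono (hp : ∀ ω, 0 ≤ p ω) {A B : Ω → Prop} (h : ∀ ω, A ω → B ω) :
    Pr p A ≤ Pr p B := by
  refine Finset.sum_le_sum fun ω _ => ?_
  by_cases hA : A ω
  · simp [hA, h ω hA]
  · by_cases hB : B ω <;> simp [hA, hB, hp ω]

lemma EI_congr {f g : Ω → ℝ} {B : Ω → Prop} (h : ∀ ω, B ω → f ω = g ω) :
    EI p f B = EI p g B := by
  refine Finset.sum_congr rfl fun ω _ => ?_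
  by_cases hB : B ω <;> simp [hB, h ω]

lemma EI_iff (f : Ω → ℝ) {B C : Ω → Prop} (h : ∀ ω, B ω ↔ C ω) :
    EI p f B = EI p f C := by
  refine Finset.sum_congr rfl fun ω _ => ?_
  rw [if_congr (h ω) rfl rfl]

lemma Pr_iff {B C : Ω → Prop} (h : ∀ ω, B ω ↔ C ω) : Pr p B = Pr p C := by
  refine Finset.sum_congr rfl fun ω _ => ?_
  rw [if_congr (h ω) rfl rfl]

lemma EI_partition {α : Type*} [Fintype α] (e : Ω → α) (f : Ω → ℝ) (B : Ω → Prop) :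
    EI p f B = ∑ a, EI p f (fun ω => B ω ∧ e ω = a) := by
  unfold EI
  rw [Finset.sum_comm]
  refine Finset.sum_congr rfl fun ω _ => ?_
  by_cases hB : B ω <;> simp [hB]

lemma Pr_partition {α : Type*} [Fintype α] (e : Ω → α) (B : Ω → Prop) :
    Pr p B = ∑ a, Pr p (fun ω => B ω ∧ e ω = a) := by
  simp only [Pr_eq_EI_one]; exact EI_partition p e _ B

lemma EI_mul_ind (f : Ω → ℝ) (A B : Ω → Prop) [inst : ∀ ω, Decidable (A ω)] :
    EI p (fun ω => f ω * (if A ω then 1 else 0)) B = EI p f (fun ω => B ω ∧ A ω) := by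
  unfold EI
  refine Finset.sum_congr rfl fun ω _ => ?_
  by_cases hA : A ω <;> by_cases hB : B ω <;> simp [hA, hB]

lemma EI_zero_of_Pr_zero (hp : ∀ ω, 0 ≤ p ω) {B : Ω → Prop} (h : Pr p B = 0) (f : Ω → ℝ) :
    EI p f B = 0 := by
  have hz : ∀ ω, B ω → p ω = 0 := by
    intro ω hB
    have := (Finset.sum_eq_zero_iff_of_nonneg (fun ω _ => by
      by_cases hA : B ω <;> simp [hA, hp ω])).mp h ω (Finset.mem_univ ω)
    simpa [hB] using this
  refine Finset.sum_eq_zero fun ω _ => ?_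
  by_cases hB : B ω <;> simp [hB, hz ω]

lemma Ex_eq_sum_EI {α : Type*} [Fintype α] (e : Ω → α) (f : Ω → ℝ) :
    Ex p f = ∑ a, EI p f (fun ω => e ω = a) := by
  unfold Ex EI
  rw [Finset.sum_comm]
  refine Finset.sum_congr rfl fun ω _ => ?_
  simp

lemma div_helper' {a b c d : ℝ} (hd : d ≠ 0) (h : a / d = b / d * (c / d)) :
    a = b / d * c := by
  calc a = a / d * d := (div_mul_cancel₀ a hd).symm
  _ = b / d * (c / d) * d := by rw [h]
  _ = b / d * c := by field_simp

end infra

/-- identification of NIE_r (Theorem 2, Equation 9 of the paper). -/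
theorem stmt7 {Ω 𝕄 U V S : Type*}
    [Fintype Ω] [Fintype 𝕄] [Fintype U] [Fintype V] [Fintype S]
    (p : Ω → ℝ) (hp : ∀ ω, 0 ≤ p ω) (hp1 : ∑ ω, p ω = 1)
    (T : Ω → Fin 2) (M : Fin 2 → Ω → 𝕄) (Y : Fin 2 → 𝕄 → Ω → ℝ)
    (ZTM : Ω → U) (ZTY : Ω → V) (ZMY : Ω → S)
    -- positivity
    (hpos : ∀ (t : Fin 2) (m : 𝕄) (z : U × V × S),
      0 < Pr p (fun ω => (ZTM ω, ZTY ω, ZMY ω) = z) →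
      0 < Pr p (fun ω => T ω = t ∧ M (T ω) ω = m ∧ (ZTM ω, ZTY ω, ZMY ω) = z))
    -- (i) cross-world independence given Z
    (hCW : ∀ (t t' : Fin 2) (m m' : 𝕄) (z : U × V × S),
      0 < Pr p (fun ω => (ZTM ω, ZTY ω, ZMY ω) = z) →
      ExCond p (fun ω => Y t m ω * (if M t' ω = m' then 1 else 0))
          (fun ω => (ZTM ω, ZTY ω, ZMY ω) = z) =
        ExCond p (fun ω => Y t m ω) (fun ω => (ZTM ω, ZTY ω, ZMY ω) = z) *
          PrCond p (fun ω => M t' ω = m') (fun ω => (ZTM ω, ZTY ω, ZMY ω) = z))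
    -- (ii) mediator ignorability
    (hMed : ∀ (t t' : Fin 2) (m : 𝕄) (v : V) (u : U) (s : S),
      0 < Pr p (fun ω => ZTM ω = u ∧ ZMY ω = s) →
      PrCond p (fun ω => M t ω = m ∧ T ω = t' ∧ ZTY ω = v)
          (fun ω => ZTM ω = u ∧ ZMY ω = s) =
        PrCond p (fun ω => M t ω = m) (fun ω => ZTM ω = u ∧ ZMY ω = s) *
          PrCond p (fun ω => T ω = t' ∧ ZTY ω = v) (fun ω => ZTM ω = u ∧ ZMY ω = s))
    -- (iii) outcome ignorability
    (hOut : ∀ (t t' : Fin 2) (m m' : 𝕄) (u : U) (v : V) (s : S),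
      0 < Pr p (fun ω => ZTY ω = v ∧ ZMY ω = s) →
      ExCond p
          (fun ω => Y t m ω * (if T ω = t' ∧ M (T ω) ω = m' ∧ ZTM ω = u then 1 else 0))
          (fun ω => ZTY ω = v ∧ ZMY ω = s) =
        ExCond p (fun ω => Y t m ω) (fun ω => ZTY ω = v ∧ ZMY ω = s) *
          PrCond p (fun ω => T ω = t' ∧ M (T ω) ω = m' ∧ ZTM ω = u)
            (fun ω => ZTY ω = v ∧ ZMY ω = s)) :
    Ex p (fun ω => Y 1 (M 0 ω) ω - Y 1 (M 1 ω) ω) =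
      ∑ z ∈ Finset.univ.filter
          (fun z : U × V × S => 0 < Pr p (fun ω => (ZTM ω, ZTY ω, ZMY ω) = z)),
        ∑ m : 𝕄,
          ExCond p (fun ω => Y (T ω) (M (T ω) ω) ω)
              (fun ω => T ω = 1 ∧ M (T ω) ω = m ∧ ZTY ω = z.2.1 ∧ ZMY ω = z.2.2) *
            (PrCond p (fun ω => M (T ω) ω = m)
                (fun ω => T ω = 0 ∧ ZTM ω = z.1 ∧ ZMY ω = z.2.2) -
              PrCond p (fun ω => M (T ω) ω = m)
                (fun ω => T ω = 1 ∧ ZTM ω = z.1 ∧ ZMY ω = z.2.2)) *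
            Pr p (fun ω => (ZTM ω, ZTY ω, ZMY ω) = z) := by
  classical
  -- law of total expectation over the support of Z
  have total : ∀ f : Ω → ℝ,
      Ex p f = ∑ z ∈ Finset.univ.filter
          (fun z : U × V × S => 0 < Pr p (fun ω => (ZTM ω, ZTY ω, ZMY ω) = z)),
        ExCond p f (fun ω => (ZTM ω, ZTY ω, ZMY ω) = z) *
          Pr p (fun ω => (ZTM ω, ZTY ω, ZMY ω) = z) := by
    intro f
    have h1 : Ex p f = ∑ z : U × V × S, EI p f (fun ω => (ZTM ω, ZTY ω, ZMY ω) = z) :=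
      Ex_eq_sum_EI p (fun ω => (ZTM ω, ZTY ω, ZMY ω)) f
    rw [h1, ← Finset.sum_filter_add_sum_filter_not Finset.univ
      (fun z : U × V × S => 0 < Pr p (fun ω => (ZTM ω, ZTY ω, ZMY ω) = z))]
    have h2 : ∑ z ∈ Finset.univ.filter
        (fun z : U × V × S => ¬ 0 < Pr p (fun ω => (ZTM ω, ZTY ω, ZMY ω) = z)),
        EI p f (fun ω => (ZTM ω, ZTY ω, ZMY ω) = z) = 0 := by
      refine Finset.sum_eq_zero fun z hzf => ?_
      rw [Finset.mem_filter] at hzf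
      exact EI_zero_of_Pr_zero p hp
        (le_antisymm (not_lt.mp hzf.2) (Pr_nonneg p hp _)) f
    rw [h2, add_zero]
    refine Finset.sum_congr rfl fun z hzf => ?_
    rw [Finset.mem_filter] at hzf
    rw [ExCond_eq, div_mul_cancel₀ _ (ne_of_gt hzf.2)]
  -- the per-z identity
  have hmain : ∀ z ∈ Finset.univ.filter
      (fun z : U × V × S => 0 < Pr p (fun ω => (ZTM ω, ZTY ω, ZMY ω) = z)),
      ExCond p (fun ω => Y 1 (M 0 ω) ω) (fun ω => (ZTM ω, ZTY ω, ZMY ω) = z)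
        - ExCond p (fun ω => Y 1 (M 1 ω) ω) (fun ω => (ZTM ω, ZTY ω, ZMY ω) = z)
      = ∑ m : 𝕄,
          ExCond p (fun ω => Y (T ω) (M (T ω) ω) ω)
              (fun ω => T ω = 1 ∧ M (T ω) ω = m ∧ ZTY ω = z.2.1 ∧ ZMY ω = z.2.2) *
            (PrCond p (fun ω => M (T ω) ω = m)
                (fun ω => T ω = 0 ∧ ZTM ω = z.1 ∧ ZMY ω = z.2.2) -
              PrCond p (fun ω => M (T ω) ω = m)
                (fun ω => T ω = 1 ∧ ZTM ω = z.1 ∧ ZMY ω = z.2.2)) := by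
    rintro ⟨u, v, s⟩ hzf
    rw [Finset.mem_filter] at hzf
    have hz := hzf.2
    dsimp only at hz ⊢
    have hZne := ne_of_gt hz
    have hBpos : 0 < Pr p (fun ω => ZTY ω = v ∧ ZMY ω = s) :=
      lt_of_lt_of_le hz (Pr_mono p hp fun ω h => by
        simp only [Prod.mk.injEq] at h; exact ⟨h.2.1, h.2.2⟩)
    have hBne := ne_of_gt hBpos
    have hCpos : 0 < Pr p (fun ω => ZTM ω = u ∧ ZMY ω = s) :=
      lt_of_lt_of_le hz (Pr_mono p hp fun ω h => by
        simp only [Prod.mk.injEq] at h; exact ⟨h.1, h.2.2⟩)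
    have hCne := ne_of_gt hCpos
    -- reformulated outcome ignorability
    have hOut' : ∀ (t' : Fin 2) (m m' : 𝕄) (u' : U),
        EI p (Y 1 m) (fun ω => (ZTY ω = v ∧ ZMY ω = s) ∧
            (T ω = t' ∧ M (T ω) ω = m' ∧ ZTM ω = u')) =
          EI p (Y 1 m) (fun ω => ZTY ω = v ∧ ZMY ω = s)
              / Pr p (fun ω => ZTY ω = v ∧ ZMY ω = s)
            * Pr p (fun ω => (T ω = t' ∧ M (T ω) ω = m' ∧ ZTM ω = u')
                ∧ (ZTY ω = v ∧ ZMY ω = s)) := by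
      intro t' m m' u'
      have h := hOut 1 t' m m' u' v s hBpos
      rw [ExCond_eq, ExCond_eq, EI_mul_ind, PrCond] at h
      exact div_helper' hBne h
    -- reformulated mediator ignorability
    have hMed' : ∀ (t t' : Fin 2) (m : 𝕄) (v' : V),
        Pr p (fun ω => (M t ω = m ∧ T ω = t' ∧ ZTY ω = v') ∧ (ZTM ω = u ∧ ZMY ω = s)) =
          Pr p (fun ω => M t ω = m ∧ (ZTM ω = u ∧ ZMY ω = s))
              / Pr p (fun ω => ZTM ω = u ∧ ZMY ω = s)
            * Pr p (fun ω => (T ω = t' ∧ ZTY ω = v') ∧ (ZTM ω = u ∧ ZMY ω = s)) := by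
      intro t t' m v'
      have h := hMed t t' m v' u s hCpos
      rw [PrCond, PrCond, PrCond] at h
      exact div_helper' hCne h
    -- nonemptiness
    have hne : Nonempty Ω := by
      by_contra h
      rw [not_nonempty_iff] at h
      have h0 : Pr p (fun ω => (ZTM ω, ZTY ω, ZMY ω) = ((u, v, s) : U × V × S)) = 0 := by
        unfold Pr; simp
      rw [h0] at hz; exact lt_irrefl 0 hz
    obtain ⟨ω₀⟩ := hne
    -- positivity of T = t' ∧ ZTM = u ∧ ZMY = s
    have hB3 : ∀ t' : Fin 2, 0 < Pr p (fun ω => T ω = t' ∧ ZTM ω = u ∧ ZMY ω = s) := by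
      intro t'
      have hex : ∃ v' : V,
          0 < Pr p (fun ω => (ZTM ω, ZTY ω, ZMY ω) = ((u, v', s) : U × V × S)) := by
        by_contra h
        push_neg at h
        have hzero : ∀ v' : V,
            Pr p (fun ω => (ZTM ω, ZTY ω, ZMY ω) = ((u, v', s) : U × V × S)) = 0 :=
          fun v' => le_antisymm (h v') (Pr_nonneg p hp _)
        have h0 : Pr p (fun ω => ZTM ω = u ∧ ZMY ω = s) = 0 := by
          rw [Pr_partition p ZTY (fun ω => ZTM ω = u ∧ ZMY ω = s)]
          refine Finset.sum_eq_zero fun v' _ => ?_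
          rw [← hzero v']
          exact Pr_iff p fun ω => by simp only [Prod.mk.injEq]; tauto
        rw [h0] at hCpos; exact lt_irrefl 0 hCpos
      obtain ⟨v', hv'⟩ := hex
      refine lt_of_lt_of_le (hpos t' (M 0 ω₀) (u, v', s) hv') (Pr_mono p hp fun ω h => ?_)
      simp only [Prod.mk.injEq] at h
      exact ⟨h.1, h.2.2.1, h.2.2.2.2⟩
    -- positivity of the outcome conditioning event
    have hA3 : ∀ m : 𝕄,
        0 < Pr p (fun ω => T ω = 1 ∧ M (T ω) ω = m ∧ ZTY ω = v ∧ ZMY ω = s) := by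
      intro m
      refine lt_of_lt_of_le (hpos 1 m (u, v, s) hz) (Pr_mono p hp fun ω h => ?_)
      simp only [Prod.mk.injEq] at h
      exact ⟨h.1, h.2.1, h.2.2.2.1, h.2.2.2.2⟩
    -- A1 : E[Y(1,m) 1_{Z=z}] = E[Y(1,m)|v,s] P(Z=z)
    have hA1 : ∀ m : 𝕄,
        EI p (Y 1 m) (fun ω => (ZTM ω, ZTY ω, ZMY ω) = ((u, v, s) : U × V × S)) =
          EI p (Y 1 m) (fun ω => ZTY ω = v ∧ ZMY ω = s)
              / Pr p (fun ω => ZTY ω = v ∧ ZMY ω = s)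
            * Pr p (fun ω => (ZTM ω, ZTY ω, ZMY ω) = ((u, v, s) : U × V × S)) := by
      intro m
      have e1 : EI p (Y 1 m) (fun ω => (ZTM ω, ZTY ω, ZMY ω) = ((u, v, s) : U × V × S)) =
          ∑ a : Fin 2 × 𝕄, EI p (Y 1 m) (fun ω => (ZTY ω = v ∧ ZMY ω = s) ∧
            (T ω = a.1 ∧ M (T ω) ω = a.2 ∧ ZTM ω = u)) := by
        rw [EI_partition p (fun ω => (T ω, M (T ω) ω))
          (Y 1 m) (fun ω => (ZTM ω, ZTY ω, ZMY ω) = ((u, v, s) : U × V × S))]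
        refine Finset.sum_congr rfl fun a _ => ?_
        obtain ⟨a1, a2⟩ := a
        exact EI_iff p _ fun ω => by simp only [Prod.mk.injEq]; tauto
      rw [e1]
      simp only [fun a : Fin 2 × 𝕄 => hOut' a.1 m a.2 u]
      rw [← Finset.mul_sum]
      congr 1
      rw [Pr_partition p (fun ω => (T ω, M (T ω) ω))
        (fun ω => (ZTM ω, ZTY ω, ZMY ω) = ((u, v, s) : U × V × S))]
      refine (Finset.sum_congr rfl fun a _ => ?_).symm
      obtain ⟨a1, a2⟩ := a
      exact Pr_iff p fun ω => by simp only [Prod.mk.injEq]; tauto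
    -- A2 : E[Y 1_{T=1,M=m,v,s}] = E[Y(1,m)|v,s] P(T=1,M=m,v,s)
    have hA2 : ∀ m : 𝕄,
        EI p (fun ω => Y (T ω) (M (T ω) ω) ω)
            (fun ω => T ω = 1 ∧ M (T ω) ω = m ∧ ZTY ω = v ∧ ZMY ω = s) =
          EI p (Y 1 m) (fun ω => ZTY ω = v ∧ ZMY ω = s)
              / Pr p (fun ω => ZTY ω = v ∧ ZMY ω = s)
            * Pr p (fun ω => T ω = 1 ∧ M (T ω) ω = m ∧ ZTY ω = v ∧ ZMY ω = s) := by
      intro m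
      have e0 : EI p (fun ω => Y (T ω) (M (T ω) ω) ω)
            (fun ω => T ω = 1 ∧ M (T ω) ω = m ∧ ZTY ω = v ∧ ZMY ω = s) =
          EI p (Y 1 m) (fun ω => T ω = 1 ∧ M (T ω) ω = m ∧ ZTY ω = v ∧ ZMY ω = s) :=
        EI_congr p fun ω h => by rw [h.2.1, h.1]
      have e1 : EI p (Y 1 m) (fun ω => T ω = 1 ∧ M (T ω) ω = m ∧ ZTY ω = v ∧ ZMY ω = s) =
          ∑ u' : U, EI p (Y 1 m) (fun ω => (ZTY ω = v ∧ ZMY ω = s) ∧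
            (T ω = 1 ∧ M (T ω) ω = m ∧ ZTM ω = u')) := by
        rw [EI_partition p ZTM (Y 1 m)
          (fun ω => T ω = 1 ∧ M (T ω) ω = m ∧ ZTY ω = v ∧ ZMY ω = s)]
        exact Finset.sum_congr rfl fun u' _ => EI_iff p _ fun ω => by tauto
      rw [e0, e1]
      simp only [fun u' : U => hOut' 1 m m u']
      rw [← Finset.mul_sum]
      congr 1
      rw [Pr_partition p ZTM
        (fun ω => T ω = 1 ∧ M (T ω) ω = m ∧ ZTY ω = v ∧ ZMY ω = s)]
      exact (Finset.sum_congr rfl fun u' _ => Pr_iff p fun ω => by tauto).symm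
    -- B1 : P(M(t')=m, Z=z) = P(M(t')=m | u,s) P(Z=z)
    have hB1 : ∀ (t' : Fin 2) (m : 𝕄),
        Pr p (fun ω => M t' ω = m ∧ (ZTM ω, ZTY ω, ZMY ω) = ((u, v, s) : U × V × S)) =
          Pr p (fun ω => M t' ω = m ∧ (ZTM ω = u ∧ ZMY ω = s))
              / Pr p (fun ω => ZTM ω = u ∧ ZMY ω = s)
            * Pr p (fun ω => (ZTM ω, ZTY ω, ZMY ω) = ((u, v, s) : U × V × S)) := by
      intro t' m
      have e1 : Pr p (fun ω => M t' ω = m ∧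
            (ZTM ω, ZTY ω, ZMY ω) = ((u, v, s) : U × V × S)) =
          ∑ t'' : Fin 2, Pr p (fun ω => (M t' ω = m ∧ T ω = t'' ∧ ZTY ω = v)
            ∧ (ZTM ω = u ∧ ZMY ω = s)) := by
        rw [Pr_partition p T
          (fun ω => M t' ω = m ∧ (ZTM ω, ZTY ω, ZMY ω) = ((u, v, s) : U × V × S))]
        exact Finset.sum_congr rfl fun t'' _ => Pr_iff p fun ω => by
          simp only [Prod.mk.injEq]; tauto
      rw [e1]
      simp only [fun t'' : Fin 2 => hMed' t' t'' m v]
      rw [← Finset.mul_sum]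
      congr 1
      rw [Pr_partition p T
        (fun ω => (ZTM ω, ZTY ω, ZMY ω) = ((u, v, s) : U × V × S))]
      exact (Finset.sum_congr rfl fun t'' _ => Pr_iff p fun ω => by
        simp only [Prod.mk.injEq]; tauto).symm
    -- B2 : P(M=m, T=t', u, s) = P(M(t')=m | u,s) P(T=t', u, s)
    have hB2 : ∀ (t' : Fin 2) (m : 𝕄),
        Pr p (fun ω => M (T ω) ω = m ∧ (T ω = t' ∧ ZTM ω = u ∧ ZMY ω = s)) =
          Pr p (fun ω => M t' ω = m ∧ (ZTM ω = u ∧ ZMY ω = s))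
              / Pr p (fun ω => ZTM ω = u ∧ ZMY ω = s)
            * Pr p (fun ω => T ω = t' ∧ ZTM ω = u ∧ ZMY ω = s) := by
      intro t' m
      have e1 : Pr p (fun ω => M (T ω) ω = m ∧ (T ω = t' ∧ ZTM ω = u ∧ ZMY ω = s)) =
          ∑ v' : V, Pr p (fun ω => (M t' ω = m ∧ T ω = t' ∧ ZTY ω = v')
            ∧ (ZTM ω = u ∧ ZMY ω = s)) := by
        rw [Pr_partition p ZTY
          (fun ω => M (T ω) ω = m ∧ (T ω = t' ∧ ZTM ω = u ∧ ZMY ω = s))]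
        refine Finset.sum_congr rfl fun v' _ => Pr_iff p fun ω => ?_
        constructor
        · rintro ⟨⟨h1, h2, h3, h4⟩, h5⟩
          exact ⟨⟨by rw [← h2]; exact h1, h2, h5⟩, h3, h4⟩
        · rintro ⟨⟨h1, h2, h5⟩, h3, h4⟩
          exact ⟨⟨by rw [h2]; exact h1, h2, h3, h4⟩, h5⟩
      rw [e1]
      simp only [fun v' : V => hMed' t' t' m v']
      rw [← Finset.mul_sum]
      congr 1
      rw [Pr_partition p ZTY (fun ω => T ω = t' ∧ ZTM ω = u ∧ ZMY ω = s)]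
      exact (Finset.sum_congr rfl fun v' _ => Pr_iff p fun ω => by tauto).symm
    -- C : expansion over the mediator using cross-world independence
    have hC : ∀ t' : Fin 2,
        ExCond p (fun ω => Y 1 (M t' ω) ω)
            (fun ω => (ZTM ω, ZTY ω, ZMY ω) = ((u, v, s) : U × V × S)) =
          ∑ m : 𝕄, ExCond p (fun ω => Y 1 m ω)
              (fun ω => (ZTM ω, ZTY ω, ZMY ω) = ((u, v, s) : U × V × S)) *
            PrCond p (fun ω => M t' ω = m)
              (fun ω => (ZTM ω, ZTY ω, ZMY ω) = ((u, v, s) : U × V × S)) := by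
      intro t'
      have expand : ExCond p (fun ω => Y 1 (M t' ω) ω)
            (fun ω => (ZTM ω, ZTY ω, ZMY ω) = ((u, v, s) : U × V × S)) =
          ∑ m : 𝕄, ExCond p (fun ω => Y 1 m ω * (if M t' ω = m then 1 else 0))
            (fun ω => (ZTM ω, ZTY ω, ZMY ω) = ((u, v, s) : U × V × S)) := by
        simp only [ExCond_eq, EI_mul_ind]
        rw [← Finset.sum_div]
        congr 1
        rw [EI_partition p (M t') (fun ω => Y 1 (M t' ω) ω)
          (fun ω => (ZTM ω, ZTY ω, ZMY ω) = ((u, v, s) : U × V × S))]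
        exact Finset.sum_congr rfl fun m _ => EI_congr p fun ω h => by rw [h.2]
      rw [expand]
      exact Finset.sum_congr rfl fun m _ => hCW 1 t' m m (u, v, s) hz
    -- assemble the per-z identity
    rw [hC 0, hC 1, ← Finset.sum_sub_distrib]
    refine Finset.sum_congr rfl fun m _ => ?_
    have hEA : ExCond p (fun ω => Y 1 m ω)
        (fun ω => (ZTM ω, ZTY ω, ZMY ω) = ((u, v, s) : U × V × S)) =
        EI p (Y 1 m) (fun ω => ZTY ω = v ∧ ZMY ω = s)
          / Pr p (fun ω => ZTY ω = v ∧ ZMY ω = s) := by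
      rw [ExCond_eq, hA1 m, mul_div_assoc, div_self hZne, mul_one]
    have hEB : ExCond p (fun ω => Y (T ω) (M (T ω) ω) ω)
        (fun ω => T ω = 1 ∧ M (T ω) ω = m ∧ ZTY ω = v ∧ ZMY ω = s) =
        EI p (Y 1 m) (fun ω => ZTY ω = v ∧ ZMY ω = s)
          / Pr p (fun ω => ZTY ω = v ∧ ZMY ω = s) := by
      rw [ExCond_eq, hA2 m, mul_div_assoc, div_self (ne_of_gt (hA3 m)), mul_one]
    have hPB : ∀ t' : Fin 2, PrCond p (fun ω => M t' ω = m)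
        (fun ω => (ZTM ω, ZTY ω, ZMY ω) = ((u, v, s) : U × V × S)) =
        Pr p (fun ω => M t' ω = m ∧ (ZTM ω = u ∧ ZMY ω = s))
          / Pr p (fun ω => ZTM ω = u ∧ ZMY ω = s) := by
      intro t'
      rw [PrCond, hB1 t' m, mul_div_assoc, div_self hZne, mul_one]
    have hPC : ∀ t' : Fin 2, PrCond p (fun ω => M (T ω) ω = m)
        (fun ω => T ω = t' ∧ ZTM ω = u ∧ ZMY ω = s) =
        Pr p (fun ω => M t' ω = m ∧ (ZTM ω = u ∧ ZMY ω = s))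
          / Pr p (fun ω => ZTM ω = u ∧ ZMY ω = s) := by
      intro t'
      rw [PrCond, hB2 t' m, mul_div_assoc, div_self (ne_of_gt (hB3 t')), mul_one]
    rw [hEA, hEB, hPB 0, hPB 1, hPC 0, hPC 1]
    ring
  -- assemble
  have hsub : Ex p (fun ω => Y 1 (M 0 ω) ω - Y 1 (M 1 ω) ω)
      = Ex p (fun ω => Y 1 (M 0 ω) ω) - Ex p (fun ω => Y 1 (M 1 ω) ω) := by
    unfold Ex
    rw [← Finset.sum_sub_distrib]
    exact Finset.sum_congr rfl fun ω _ => by ring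
  rw [hsub, total (fun ω => Y 1 (M 0 ω) ω), total (fun ω => Y 1 (M 1 ω) ω),
    ← Finset.sum_sub_distrib]
  refine Finset.sum_congr rfl fun z hzf => ?_
  rw [← sub_mul, hmain z hzf, Finset.sum_mul]
end
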